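/- arXiv:2502.12142 — 2 statements merged into one kernel-verified Lean document; each statement's English description precedes it below -/
import Mathlib

section
/- The 8-component vector w(x) with components given by all products j_{ℓ₁+ε₁}(k₁x) j_{ℓ₂+ε₂}(k₂x) j_{ℓ₃+ε₃}(k₃x) for εᵢ ∈ {0,1} (ordered as in the paper) satisfies a first-order linear ODE w'(x) = A(x) w(x) where each entry of A(x) is either 0, ±kᵢ, or c/x for an integer c determined by ℓ₁, ℓ₂, ℓ₃; in particular A₁₁ = (ℓ₁+ℓ₂+ℓ₃)/x and A₈₈ = −(ℓ₁+ℓ₂+ℓ₃+6)/x. -/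
/-!
By the two recurrences and the chain rule, each pair `(j_{ℓᵢ}(kᵢ·), j_{ℓᵢ+1}(kᵢ·))` solves a
`2 × 2` linear system `uᵢ' = Bᵢ uᵢ`. By the product rule, the eight triple products, i.e. the
entries of `u₁ ⊗ u₂ ⊗ u₃`, then solve the system given by the Kronecker sum of the `Bᵢ`: its
diagonal entries are sums of the diagonal entries `ℓᵢ/x`, `-(ℓᵢ+2)/x` of the `Bᵢ`, and its
off-diagonal entries are the `±kᵢ` linking two triples that differ in one index.
-/

open Matrix

section SphBesselTriple

variable {j : ℕ → ℝ → ℝ} {k x : ℝ}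

lemma hasDerivAt_sphBessel_comp_const_mul
    (hj : ∀ (ℓ : ℕ) (z : ℝ), 0 < z → HasDerivAt (j ℓ) ((ℓ / z) * j ℓ z - j (ℓ + 1) z) z)
    (ℓ : ℕ) (hk : 0 < k) (hx : 0 < x) :
    HasDerivAt (fun y => j ℓ (k * y)) (ℓ / x * j ℓ (k * x) - k * j (ℓ + 1) (k * x)) x := by
  refine ((hj ℓ (k * x) (by positivity)).comp x (hasDerivAt_const_mul k)).congr_deriv ?_
  field_simp

lemma hasDerivAt_sphBessel_succ_comp_const_mul
    (hj' : ∀ (ℓ : ℕ) (z : ℝ), 0 < z →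
      HasDerivAt (j (ℓ + 1)) (j ℓ z - ((ℓ + 2) / z) * j (ℓ + 1) z) z)
    (ℓ : ℕ) (hk : 0 < k) (hx : 0 < x) :
    HasDerivAt (fun y => j (ℓ + 1) (k * y))
      (k * j ℓ (k * x) - (ℓ + 2) / x * j (ℓ + 1) (k * x)) x := by
  refine ((hj' ℓ (k * x) (by positivity)).comp x (hasDerivAt_const_mul k)).congr_deriv ?_
  field_simp

variable (j) (ℓ₁ ℓ₂ ℓ₃ : ℕ) (k₁ k₂ k₃ : ℝ)

def sphBesselTripleVec (y : ℝ) : Fin 8 → ℝ :=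
  ![j ℓ₁ (k₁ * y) * j ℓ₂ (k₂ * y) * j ℓ₃ (k₃ * y),
    j (ℓ₁ + 1) (k₁ * y) * j ℓ₂ (k₂ * y) * j ℓ₃ (k₃ * y),
    j ℓ₁ (k₁ * y) * j (ℓ₂ + 1) (k₂ * y) * j ℓ₃ (k₃ * y),
    j ℓ₁ (k₁ * y) * j ℓ₂ (k₂ * y) * j (ℓ₃ + 1) (k₃ * y),
    j (ℓ₁ + 1) (k₁ * y) * j (ℓ₂ + 1) (k₂ * y) * j ℓ₃ (k₃ * y),
    j ℓ₁ (k₁ * y) * j (ℓ₂ + 1) (k₂ * y) * j (ℓ₃ + 1) (k₃ * y),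
    j (ℓ₁ + 1) (k₁ * y) * j ℓ₂ (k₂ * y) * j (ℓ₃ + 1) (k₃ * y),
    j (ℓ₁ + 1) (k₁ * y) * j (ℓ₂ + 1) (k₂ * y) * j (ℓ₃ + 1) (k₃ * y)]

/-- The Kronecker sum of the matrices `Bᵢ = !![ℓᵢ/x, -kᵢ; kᵢ, -(ℓᵢ+2)/x]`, in the basis order
of `sphBesselTripleVec`. -/
noncomputable def sphBesselTripleMatrix (x : ℝ) : Matrix (Fin 8) (Fin 8) ℝ :=
  !![((ℓ₁ + ℓ₂ + ℓ₃ : ℤ) : ℝ) / x, -k₁, -k₂, -k₃, 0, 0, 0, 0;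
     k₁, ((ℓ₂ + ℓ₃ - ℓ₁ - 2 : ℤ) : ℝ) / x, 0, 0, -k₂, 0, -k₃, 0;
     k₂, 0, ((ℓ₁ + ℓ₃ - ℓ₂ - 2 : ℤ) : ℝ) / x, 0, -k₁, -k₃, 0, 0;
     k₃, 0, 0, ((ℓ₁ + ℓ₂ - ℓ₃ - 2 : ℤ) : ℝ) / x, 0, -k₂, -k₁, 0;
     0, k₂, k₁, 0, ((ℓ₃ - ℓ₁ - ℓ₂ - 4 : ℤ) : ℝ) / x, 0, 0, -k₃;
     0, 0, k₃, k₂, 0, ((ℓ₁ - ℓ₂ - ℓ₃ - 4 : ℤ) : ℝ) / x, 0, -k₁;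
     0, k₃, 0, k₁, 0, 0, ((ℓ₂ - ℓ₁ - ℓ₃ - 4 : ℤ) : ℝ) / x, -k₂;
     0, 0, 0, 0, k₃, k₁, k₂, ((-ℓ₁ - ℓ₂ - ℓ₃ - 6 : ℤ) : ℝ) / x]

lemma sphBesselTripleMatrix_apply_mem (x : ℝ) (a b : Fin 8) :
    sphBesselTripleMatrix ℓ₁ ℓ₂ ℓ₃ k₁ k₂ k₃ x a b ∈
      ({0, k₁, -k₁, k₂, -k₂, k₃, -k₃} : Set ℝ) ∪ {a | ∃ c : ℤ, a = c / x} := by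
  fin_cases a <;> fin_cases b <;> first | exact Or.inr ⟨_, rfl⟩ | simp [sphBesselTripleMatrix]

variable {j k₁ k₂ k₃}

theorem hasDerivAt_sphBesselTripleVec
    (hj : ∀ (ℓ : ℕ) (z : ℝ), 0 < z → HasDerivAt (j ℓ) ((ℓ / z) * j ℓ z - j (ℓ + 1) z) z)
    (hj' : ∀ (ℓ : ℕ) (z : ℝ), 0 < z →
      HasDerivAt (j (ℓ + 1)) (j ℓ z - ((ℓ + 2) / z) * j (ℓ + 1) z) z)
    (hk₁ : 0 < k₁) (hk₂ : 0 < k₂) (hk₃ : 0 < k₃) (hx : 0 < x) :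
    HasDerivAt (sphBesselTripleVec j ℓ₁ ℓ₂ ℓ₃ k₁ k₂ k₃)
      (sphBesselTripleMatrix ℓ₁ ℓ₂ ℓ₃ k₁ k₂ k₃ x *ᵥ sphBesselTripleVec j ℓ₁ ℓ₂ ℓ₃ k₁ k₂ k₃ x) x := by
  have l₁ := hasDerivAt_sphBessel_comp_const_mul hj ℓ₁ hk₁ hx
  have l₂ := hasDerivAt_sphBessel_comp_const_mul hj ℓ₂ hk₂ hx
  have l₃ := hasDerivAt_sphBessel_comp_const_mul hj ℓ₃ hk₃ hx
  have u₁ := hasDerivAt_sphBessel_succ_comp_const_mul hj' ℓ₁ hk₁ hx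
  have u₂ := hasDerivAt_sphBessel_succ_comp_const_mul hj' ℓ₂ hk₂ hx
  have u₃ := hasDerivAt_sphBessel_succ_comp_const_mul hj' ℓ₃ hk₃ hx
  refine hasDerivAt_pi.2 fun i => ?_
  fin_cases i <;> [
    refine ((l₁.mul l₂).mul l₃).congr_deriv ?_;
    refine ((u₁.mul l₂).mul l₃).congr_deriv ?_;
    refine ((l₁.mul u₂).mul l₃).congr_deriv ?_;
    refine ((l₁.mul l₂).mul u₃).congr_deriv ?_;
    refine ((u₁.mul u₂).mul l₃).congr_deriv ?_;
    refine ((l₁.mul u₂).mul u₃).congr_deriv ?_;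
    refine ((u₁.mul l₂).mul u₃).congr_deriv ?_;
    refine ((u₁.mul u₂).mul u₃).congr_deriv ?_] <;>
  · simp only [mulVec, dotProduct, Fin.sum_univ_eight, sphBesselTripleMatrix, sphBesselTripleVec,
      of_apply, cons_val', cons_val, cons_val_zero, cons_val_one, cons_val_fin_one, Fin.isValue,
      Fin.mk_one, Fin.zero_eta, Fin.reduceFinMk, Pi.mul_apply]
    push_cast
    field_simp
    ring

end SphBesselTriple

/-- the 8-vector of all products `j_{ℓ₁+ε₁}(k₁x) j_{ℓ₂+ε₂}(k₂x) j_{ℓ₃+ε₃}(k₃x)`,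
`εᵢ ∈ {0,1}`, ordered (000),(100),(010),(001),(110),(011),(101),(111), satisfies a
first-order linear ODE `w' = A w` where every entry of `A` is `0`, `±kᵢ`, or `c/x` for
an integer `c`; in particular `A₁₁ = (ℓ₁+ℓ₂+ℓ₃)/x` and `A₈₈ = -(ℓ₁+ℓ₂+ℓ₃+6)/x`. -/
theorem sph_bessel_triple_ode (j : ℕ → ℝ → ℝ)
    (hj : ∀ (ℓ : ℕ) (z : ℝ), 0 < z →
      HasDerivAt (j ℓ) ((ℓ / z) * j ℓ z - j (ℓ + 1) z) z)
    (hj' : ∀ (ℓ : ℕ) (z : ℝ), 0 < z →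
      HasDerivAt (j (ℓ + 1)) (j ℓ z - ((ℓ + 2) / z) * j (ℓ + 1) z) z)
    (ℓ₁ ℓ₂ ℓ₃ : ℕ) (k₁ k₂ k₃ : ℝ) (hk₁ : 0 < k₁) (hk₂ : 0 < k₂) (hk₃ : 0 < k₃)
    (x : ℝ) (hx : 0 < x) :
    ∃ A : Matrix (Fin 8) (Fin 8) ℝ,
      HasDerivAt
        (fun y : ℝ =>
          ![j ℓ₁ (k₁ * y) * j ℓ₂ (k₂ * y) * j ℓ₃ (k₃ * y),
            j (ℓ₁ + 1) (k₁ * y) * j ℓ₂ (k₂ * y) * j ℓ₃ (k₃ * y),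
            j ℓ₁ (k₁ * y) * j (ℓ₂ + 1) (k₂ * y) * j ℓ₃ (k₃ * y),
            j ℓ₁ (k₁ * y) * j ℓ₂ (k₂ * y) * j (ℓ₃ + 1) (k₃ * y),
            j (ℓ₁ + 1) (k₁ * y) * j (ℓ₂ + 1) (k₂ * y) * j ℓ₃ (k₃ * y),
            j ℓ₁ (k₁ * y) * j (ℓ₂ + 1) (k₂ * y) * j (ℓ₃ + 1) (k₃ * y),
            j (ℓ₁ + 1) (k₁ * y) * j ℓ₂ (k₂ * y) * j (ℓ₃ + 1) (k₃ * y),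
            j (ℓ₁ + 1) (k₁ * y) * j (ℓ₂ + 1) (k₂ * y) * j (ℓ₃ + 1) (k₃ * y)])
        (A.mulVec
          ![j ℓ₁ (k₁ * x) * j ℓ₂ (k₂ * x) * j ℓ₃ (k₃ * x),
            j (ℓ₁ + 1) (k₁ * x) * j ℓ₂ (k₂ * x) * j ℓ₃ (k₃ * x),
            j ℓ₁ (k₁ * x) * j (ℓ₂ + 1) (k₂ * x) * j ℓ₃ (k₃ * x),
            j ℓ₁ (k₁ * x) * j ℓ₂ (k₂ * x) * j (ℓ₃ + 1) (k₃ * x),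
            j (ℓ₁ + 1) (k₁ * x) * j (ℓ₂ + 1) (k₂ * x) * j ℓ₃ (k₃ * x),
            j ℓ₁ (k₁ * x) * j (ℓ₂ + 1) (k₂ * x) * j (ℓ₃ + 1) (k₃ * x),
            j (ℓ₁ + 1) (k₁ * x) * j ℓ₂ (k₂ * x) * j (ℓ₃ + 1) (k₃ * x),
            j (ℓ₁ + 1) (k₁ * x) * j (ℓ₂ + 1) (k₂ * x) * j (ℓ₃ + 1) (k₃ * x)]) x ∧
      (∀ i j' : Fin 8, A i j' = 0 ∨ A i j' = k₁ ∨ A i j' = -k₁ ∨ A i j' = k₂ ∨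
        A i j' = -k₂ ∨ A i j' = k₃ ∨ A i j' = -k₃ ∨ ∃ c : ℤ, A i j' = (c : ℝ) / x) ∧
      A 0 0 = ((ℓ₁ : ℝ) + ℓ₂ + ℓ₃) / x ∧
      A 7 7 = -(((ℓ₁ : ℝ) + ℓ₂ + ℓ₃) + 6) / x := by
  refine ⟨sphBesselTripleMatrix ℓ₁ ℓ₂ ℓ₃ k₁ k₂ k₃ x,
    hasDerivAt_sphBesselTripleVec ℓ₁ ℓ₂ ℓ₃ hj hj' hk₁ hk₂ hk₃ hx, fun a b => ?_, ?_, ?_⟩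
  · simpa only [Set.mem_union, Set.mem_insert_iff, Set.mem_singleton_iff, Set.mem_ofPred_eq,
      or_assoc] using sphBesselTripleMatrix_apply_mem ℓ₁ ℓ₂ ℓ₃ k₁ k₂ k₃ x a b
  · simp [sphBesselTripleMatrix]
  · show ((-ℓ₁ - ℓ₂ - ℓ₃ - 6 : ℤ) : ℝ) / x = _
    push_cast
    ring
end

section
/- If f : [a,b] → ℝ is continuously differentiable and k > 0, then ∫_a^b f(x) j_ℓ(kx) dx = [p₁(x) j_ℓ(kx) + p₂(x) j_{ℓ+1}(kx)]_a^b for any continuously differentiable p₁, p₂ : [a,b] → ℝ satisfying p₁'(x) + (ℓ/x) p₁(x) + k p₂(x) = f(x) and p₂'(x) − k p₁(x) − ((ℓ+2)/x) p₂(x) = 0 on [a,b], assuming 0 < a < b. -/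
/-!
Levin's method. If `w = (w₁, w₂)` solves the linear system `w' = C w` and `p = (p₁, p₂)` solves
the adjoint system `p' + Cᵀ p = (f, 0)`, then `(⟨p, w⟩)' = ⟨p' + Cᵀ p, w⟩ = f w₁`, so `∫ f w₁` is
the boundary term of `⟨p, w⟩`. The recurrences for `j_ℓ, j_{ℓ+1}` say that
`w(x) = (j_ℓ(kx), j_{ℓ+1}(kx))` solves such a system with
`C(x) = [[ℓ/x, -k], [k, -(ℓ+2)/x]]`, whose adjoint system is the one in the hypotheses.
-/

open MeasureTheory Set

theorem intervalIntegral.integral_eq_sub_of_hasDerivWithinAt_Icc {E : Type*}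
    [NormedAddCommGroup E] [NormedSpace ℝ E] [CompleteSpace E] {f f' : ℝ → E} {a b : ℝ} (hab : a ≤ b)
    (hderiv : ∀ x ∈ Icc a b, HasDerivWithinAt f (f' x) (Icc a b) x)
    (hint : IntervalIntegrable f' volume a b) :
    ∫ y in a..b, f' y = f b - f a :=
  integral_eq_sub_of_hasDerivAt_of_le hab (fun x hx => (hderiv x hx).continuousWithinAt)
    (fun x hx => (hderiv x (Ioo_subset_Icc_self hx)).hasDerivAt (Icc_mem_nhds hx.1 hx.2)) hint

section Levin

variable {w₁ w₂ p₁ p₂ : ℝ → ℝ}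

theorem HasDerivWithinAt.levin_pairing {s : Set ℝ} {x c₁₁ c₁₂ c₂₁ c₂₂ q₁ q₂ g : ℝ}
    (hw₁ : HasDerivWithinAt w₁ (c₁₁ * w₁ x + c₁₂ * w₂ x) s x)
    (hw₂ : HasDerivWithinAt w₂ (c₂₁ * w₁ x + c₂₂ * w₂ x) s x)
    (hp₁ : HasDerivWithinAt p₁ q₁ s x) (hp₂ : HasDerivWithinAt p₂ q₂ s x)
    (h₁ : q₁ + c₁₁ * p₁ x + c₂₁ * p₂ x = g) (h₂ : q₂ + c₁₂ * p₁ x + c₂₂ * p₂ x = 0) :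
    HasDerivWithinAt (fun y => p₁ y * w₁ y + p₂ y * w₂ y) (g * w₁ x) s x :=
  ((hp₁.mul hw₁).add (hp₂.mul hw₂)).congr_deriv (by linear_combination w₁ x * h₁ + w₂ x * h₂)

theorem integral_mul_eq_sub_of_levin {a b : ℝ} (hab : a ≤ b)
    {c₁₁ c₁₂ c₂₁ c₂₂ q₁ q₂ g : ℝ → ℝ}
    (hw₁ : ∀ x ∈ Icc a b, HasDerivWithinAt w₁ (c₁₁ x * w₁ x + c₁₂ x * w₂ x) (Icc a b) x)
    (hw₂ : ∀ x ∈ Icc a b, HasDerivWithinAt w₂ (c₂₁ x * w₁ x + c₂₂ x * w₂ x) (Icc a b) x)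
    (hp₁ : ∀ x ∈ Icc a b, HasDerivWithinAt p₁ (q₁ x) (Icc a b) x)
    (hp₂ : ∀ x ∈ Icc a b, HasDerivWithinAt p₂ (q₂ x) (Icc a b) x)
    (h₁ : ∀ x ∈ Icc a b, q₁ x + c₁₁ x * p₁ x + c₂₁ x * p₂ x = g x)
    (h₂ : ∀ x ∈ Icc a b, q₂ x + c₁₂ x * p₁ x + c₂₂ x * p₂ x = 0)
    (hint : IntervalIntegrable (fun x => g x * w₁ x) volume a b) :
    ∫ x in a..b, g x * w₁ x = (p₁ b * w₁ b + p₂ b * w₂ b) - (p₁ a * w₁ a + p₂ a * w₂ a) :=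
  intervalIntegral.integral_eq_sub_of_hasDerivWithinAt_Icc hab
    (fun x hx => (hw₁ x hx).levin_pairing (hw₂ x hx) (hp₁ x hx) (hp₂ x hx) (h₁ x hx) (h₂ x hx))
    hint

end Levin

section SphericalBessel

variable {j : ℕ → ℝ → ℝ} {ℓ : ℕ} {k x : ℝ}

theorem hasDerivAt_comp_mul_of_hasDerivAt_sphBessel (hkx : 0 < k * x)
    (hj : HasDerivAt (j ℓ) ((ℓ / (k * x)) * j ℓ (k * x) - j (ℓ + 1) (k * x)) (k * x)) :
    HasDerivAt (fun y => j ℓ (k * y)) ((ℓ / x) * j ℓ (k * x) + -k * j (ℓ + 1) (k * x)) x := by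
  have hk : k ≠ 0 := left_ne_zero_of_mul hkx.ne'
  have hx : x ≠ 0 := right_ne_zero_of_mul hkx.ne'
  refine (hj.comp x ((hasDerivAt_id x).const_mul k)).congr_deriv ?_
  field_simp
  ring

theorem hasDerivAt_comp_mul_of_hasDerivAt_sphBessel_succ (hkx : 0 < k * x)
    (hj : HasDerivAt (j (ℓ + 1)) (j ℓ (k * x) - ((ℓ + 2) / (k * x)) * j (ℓ + 1) (k * x))
      (k * x)) :
    HasDerivAt (fun y => j (ℓ + 1) (k * y))
      (k * j ℓ (k * x) + -((ℓ + 2) / x) * j (ℓ + 1) (k * x)) x := by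
  have hk : k ≠ 0 := left_ne_zero_of_mul hkx.ne'
  have hx : x ≠ 0 := right_ne_zero_of_mul hkx.ne'
  refine (hj.comp x ((hasDerivAt_id x).const_mul k)).congr_deriv ?_
  field_simp
  ring

end SphericalBessel

theorem levin_single_sph_bessel_general (j : ℕ → ℝ → ℝ)
    (hj : ∀ (ℓ : ℕ) (z : ℝ), 0 < z →
      HasDerivAt (j ℓ) ((ℓ / z) * j ℓ z - j (ℓ + 1) z) z)
    (hj' : ∀ (ℓ : ℕ) (z : ℝ), 0 < z →
      HasDerivAt (j (ℓ + 1)) (j ℓ z - ((ℓ + 2) / z) * j (ℓ + 1) z) z)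
    (ℓ : ℕ) (a b k : ℝ) (ha : 0 < a) (hab : a < b) (hk : 0 < k)
    (f f' : ℝ → ℝ)
    (hf : ∀ x ∈ Set.Icc a b, HasDerivWithinAt f (f' x) (Set.Icc a b) x)
    (p₁ p₂ p₁' p₂' : ℝ → ℝ)
    (hp₁ : ∀ x ∈ Set.Icc a b, HasDerivWithinAt p₁ (p₁' x) (Set.Icc a b) x)
    (hp₂ : ∀ x ∈ Set.Icc a b, HasDerivWithinAt p₂ (p₂' x) (Set.Icc a b) x)
    (heq₁ : ∀ x ∈ Set.Icc a b, p₁' x + ((ℓ : ℝ) / x) * p₁ x + k * p₂ x = f x)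
    (heq₂ : ∀ x ∈ Set.Icc a b, p₂' x - k * p₁ x - (((ℓ : ℝ) + 2) / x) * p₂ x = 0) :
    ∫ x in a..b, f x * j ℓ (k * x) =
      (p₁ b * j ℓ (k * b) + p₂ b * j (ℓ + 1) (k * b)) -
      (p₁ a * j ℓ (k * a) + p₂ a * j (ℓ + 1) (k * a)) := by
  have hkx : ∀ x ∈ Icc a b, 0 < k * x := fun x hx => mul_pos hk (ha.trans_le hx.1)
  have hw₁ : ∀ x ∈ Icc a b, HasDerivAt (fun y => j ℓ (k * y))
      ((ℓ / x) * j ℓ (k * x) + -k * j (ℓ + 1) (k * x)) x := fun x hx =>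
    hasDerivAt_comp_mul_of_hasDerivAt_sphBessel (hkx x hx) (hj ℓ _ (hkx x hx))
  have hw₂ : ∀ x ∈ Icc a b, HasDerivAt (fun y => j (ℓ + 1) (k * y))
      (k * j ℓ (k * x) + -((ℓ + 2) / x) * j (ℓ + 1) (k * x)) x := fun x hx =>
    hasDerivAt_comp_mul_of_hasDerivAt_sphBessel_succ (hkx x hx) (hj' ℓ _ (hkx x hx))
  have hint : IntervalIntegrable (fun x => f x * j ℓ (k * x)) volume a b := by
    refine ContinuousOn.intervalIntegrable ?_
    rw [uIcc_of_le hab.le]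
    exact ContinuousOn.mul (fun x hx => (hf x hx).continuousWithinAt)
      fun x hx => (hw₁ x hx).continuousAt.continuousWithinAt
  exact integral_mul_eq_sub_of_levin hab.le (fun x hx => (hw₁ x hx).hasDerivWithinAt)
    (fun x hx => (hw₂ x hx).hasDerivWithinAt) hp₁ hp₂ heq₁
    (fun x hx => by linear_combination heq₂ x hx) hint

/-- single-spherical-Bessel instance of Levin's method: the oscillatory
integral reduces to boundary terms of `p₁ j_ℓ + p₂ j_{ℓ+1}` when `p₁, p₂` satisfy
the Levin ODE system. -/
theorem levin_single_sph_bessel (j : ℕ → ℝ → ℝ)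
    (hj : ∀ (ℓ : ℕ) (z : ℝ), 0 < z →
      HasDerivAt (j ℓ) ((ℓ / z) * j ℓ z - j (ℓ + 1) z) z)
    (hj' : ∀ (ℓ : ℕ) (z : ℝ), 0 < z →
      HasDerivAt (j (ℓ + 1)) (j ℓ z - ((ℓ + 2) / z) * j (ℓ + 1) z) z)
    (ℓ : ℕ) (a b k : ℝ) (ha : 0 < a) (hab : a < b) (hk : 0 < k)
    (f f' : ℝ → ℝ)
    (hf : ∀ x ∈ Set.Icc a b, HasDerivWithinAt f (f' x) (Set.Icc a b) x)
    (hf' : ContinuousOn f' (Set.Icc a b))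
    (p₁ p₂ p₁' p₂' : ℝ → ℝ)
    (hp₁ : ∀ x ∈ Set.Icc a b, HasDerivWithinAt p₁ (p₁' x) (Set.Icc a b) x)
    (hp₂ : ∀ x ∈ Set.Icc a b, HasDerivWithinAt p₂ (p₂' x) (Set.Icc a b) x)
    (hp₁' : ContinuousOn p₁' (Set.Icc a b))
    (hp₂' : ContinuousOn p₂' (Set.Icc a b))
    (heq₁ : ∀ x ∈ Set.Icc a b, p₁' x + ((ℓ : ℝ) / x) * p₁ x + k * p₂ x = f x)
    (heq₂ : ∀ x ∈ Set.Icc a b, p₂' x - k * p₁ x - (((ℓ : ℝ) + 2) / x) * p₂ x = 0) :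
    ∫ x in a..b, f x * j ℓ (k * x) =
      (p₁ b * j ℓ (k * b) + p₂ b * j (ℓ + 1) (k * b)) -
      (p₁ a * j ℓ (k * a) + p₂ a * j (ℓ + 1) (k * a)) :=
  levin_single_sph_bessel_general j hj hj' ℓ a b k ha hab hk f f' hf p₁ p₂ p₁' p₂' hp₁ hp₂ heq₁ heq₂
end
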